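/- Under the OR policy, the cost-to-go of a concatenated list of remaining customers dominates the sum of the prefix cost-to-go and the full-capacity recourse of the suffix: for every previous customer i, every list L1, every nonempty list L2 of remaining customers (with L1 ++ L2 consisting of distinct customers), and every residual capacity q ∈ {0, …, Q}, one has F(i, L1 ++ L2, q) ≥ F(i, L1, q) + Q̄^OR_{L2}. In particular, taking L1 empty, F(i, L2, q) ≥ Q̄^OR_{L2} for every q. -/

import Mathlib

open ENNReal

/-- `Ψ(s, q) = max(⌈(s − q)/Q⌉, 0)`: the number of restocking trips needed to serve a
demand of `s` units from residual capacity `q`, with vehicle capacity `Q`. -/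
noncomputable def psi (Q s q : ℕ) : ℕ := (⌈((s : ℚ) - (q : ℚ)) / (Q : ℚ)⌉).toNat

/-- The optimal-restocking (OR) expected cost-to-go `F(i, L, q)`. -/
noncomputable def orF {N : Type*} (ρ : N → PMF ℕ) (Q : ℕ) (cF : N → ℝ) (cP : N → N → ℝ) :
    N → List N → ℕ → ℝ≥0∞
  | _, [], _ => 0
  | i, j :: L', q =>
    min
      (∑' s : ℕ, (ENNReal.ofReal (cF j) * (psi Q s q : ℝ≥0∞)
          + orF ρ Q cF cP j L' (psi Q s q * Q + q - s)) * ρ j s)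
      (ENNReal.ofReal (cP i j) +
        ∑' s : ℕ, (ENNReal.ofReal (cF j) * (psi Q s Q : ℝ≥0∞)
          + orF ρ Q cF cP j L' (psi Q s Q * Q + Q - s)) * ρ j s)

/-- The OR cost-to-go `H(j :: L', q)` of proceeding directly to customer `j`. -/
noncomputable def orH {N : Type*} (ρ : N → PMF ℕ) (Q : ℕ) (cF : N → ℝ) (cP : N → N → ℝ)
    (j : N) (L' : List N) (q : ℕ) : ℝ≥0∞ :=
  ∑' s : ℕ, (ENNReal.ofReal (cF j) * (psi Q s q : ℝ≥0∞)
      + orF ρ Q cF cP j L' (psi Q s q * Q + q - s)) * ρ j s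

/-- `Q̄ᴼᴿ_p = H(p, Q)`: the OR recourse cost of the route `(0, p, 0)` along `p`. -/
noncomputable def QbarOR {N : Type*} (ρ : N → PMF ℕ) (Q : ℕ) (cF : N → ℝ)
    (cP : N → N → ℝ) : List N → ℝ≥0∞
  | [] => 0
  | j :: L' => orH ρ Q cF cP j L' Q

section AuxOR

variable {N : Type*} (ρ : N → PMF ℕ) (Q : ℕ) (cF : N → ℝ) (cP : N → N → ℝ)

lemma orF_nil (i : N) (q : ℕ) : orF ρ Q cF cP i [] q = 0 := rfl

lemma orF_cons (i j : N) (L' : List N) (q : ℕ) :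
    orF ρ Q cF cP i (j :: L') q =
      min (orH ρ Q cF cP j L' q)
        (ENNReal.ofReal (cP i j) + orH ρ Q cF cP j L' Q) := rfl

lemma psi_anti (hQ : 1 ≤ Q) (s : ℕ) {q q' : ℕ} (h : q ≤ q') :
    psi Q s q' ≤ psi Q s q := by
  have hQ0 : (0:ℚ) < Q := by exact_mod_cast hQ
  have hc : ⌈((s:ℚ) - q') / Q⌉ ≤ ⌈((s:ℚ) - q) / Q⌉ := by
    apply Int.ceil_le_ceil
    have : (q:ℚ) ≤ q' := by exact_mod_cast h
    gcongr
  unfold psi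
  omega

lemma psi_le_succ (hQ : 1 ≤ Q) (s : ℕ) {q q' : ℕ} (h : q' ≤ q + Q) :
    psi Q s q ≤ psi Q s q' + 1 := by
  have hQ0 : (0:ℚ) < Q := by exact_mod_cast hQ
  have key : ⌈((s:ℚ) - q) / Q⌉ ≤ ⌈((s:ℚ) - q') / Q⌉ + 1 := by
    rw [← Int.ceil_add_one]
    apply Int.ceil_le_ceil
    have heq : ((s:ℚ) - q') / Q + 1 = ((s:ℚ) - q' + Q) / Q := by
      field_simp
    rw [heq]
    have : (q':ℚ) ≤ q + Q := by exact_mod_cast h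
    gcongr
    linarith
  unfold psi
  omega

lemma rem_le (hQ : 1 ≤ Q) {q : ℕ} (hq : q ≤ Q) (s : ℕ) :
    psi Q s q * Q + q - s ≤ Q := by
  have hQ0 : (0:ℚ) < Q := by exact_mod_cast hQ
  rcases le_or_gt s q with h | h
  · have h0 : psi Q s q = 0 := by
      have : ⌈((s:ℚ) - q) / Q⌉ ≤ (0:ℤ) := by
        apply Int.ceil_le.mpr
        push_cast
        apply div_nonpos_of_nonpos_of_nonneg
        · have : (s:ℚ) ≤ q := by exact_mod_cast h
          linarith
        · positivity
      unfold psi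
      omega
    rw [h0, zero_mul]
    omega
  · set x := ⌈((s:ℚ) - q) / Q⌉ with hx
    have hxpos : 0 < x := by
      rw [hx, Int.ceil_pos]
      apply div_pos _ hQ0
      have : (q:ℚ) < s := by exact_mod_cast h
      linarith
    have hxlt : (x:ℚ) < ((s:ℚ) - q) / Q + 1 := Int.ceil_lt_add_one _
    have hmul : (x:ℚ) * Q < (s:ℚ) - q + Q := by
      have h2 := mul_lt_mul_of_pos_right hxlt hQ0
      rwa [add_mul, one_mul, div_mul_cancel₀ _ hQ0.ne'] at h2
    have htn : (x.toNat : ℤ) = x := Int.toNat_of_nonneg hxpos.le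
    have hZ : (x.toNat : ℤ) * Q + q < s + Q := by
      rw [htn]
      have : ((x:ℚ) * Q + q) < s + Q := by linarith
      exact_mod_cast this
    have hN : x.toNat * Q + q < s + Q := by exact_mod_cast hZ
    have hps : psi Q s q = x.toNat := by unfold psi; rw [← hx]
    rw [hps]
    omega

lemma mono_bd (hQ : 1 ≤ Q) (hcPF : ∀ a b, cP a b ≤ cF a) (L : List N) :
    (∀ j L', L = j :: L' → ∀ ⦃q q' : ℕ⦄, q ≤ q' → q' ≤ Q →
        orH ρ Q cF cP j L' q' ≤ orH ρ Q cF cP j L' q) ∧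
    (∀ i, ∀ ⦃q q' : ℕ⦄, q ≤ q' → q' ≤ Q →
        orF ρ Q cF cP i L q' ≤ orF ρ Q cF cP i L q) ∧
    (∀ i, ∀ ⦃q q' : ℕ⦄, q ≤ q' → q' ≤ Q →
        orF ρ Q cF cP i L q ≤ ENNReal.ofReal (cF i) + orF ρ Q cF cP i L q') := by
  induction L with
  | nil =>
    refine ⟨by rintro j L' ⟨⟩, ?_, ?_⟩
    · intro i q q' _ _; rw [orF_nil, orF_nil]
    · intro i q q' _ _; rw [orF_nil]; exact zero_le
  | cons j L' IH =>
    obtain ⟨-, IHmono, IHbd⟩ := IH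
    have hH : ∀ ⦃q q' : ℕ⦄, q ≤ q' → q' ≤ Q →
        orH ρ Q cF cP j L' q' ≤ orH ρ Q cF cP j L' q := by
      intro q q' hqq hq'
      unfold orH
      apply ENNReal.tsum_le_tsum
      intro s
      apply mul_le_mul_left
      have hk'k : psi Q s q' ≤ psi Q s q := psi_anti Q hQ s hqq
      have hkk' : psi Q s q ≤ psi Q s q' + 1 := psi_le_succ Q hQ s (by omega)
      have hrQ : psi Q s q * Q + q - s ≤ Q := rem_le Q hQ (hqq.trans hq') s
      have hr'Q : psi Q s q' * Q + q' - s ≤ Q := rem_le Q hQ hq' s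
      rcases eq_or_lt_of_le hk'k with he | hlt
      · rw [← he]
        apply add_le_add_right
        apply IHmono j _ hr'Q
        exact Nat.sub_le_sub_right (by omega) s
      · have he : psi Q s q = psi Q s q' + 1 := by omega
        have hr'r : psi Q s q' * Q + q' - s ≤ psi Q s q * Q + q - s := by
          apply Nat.sub_le_sub_right
          rw [he, add_mul, one_mul]
          omega
        calc ENNReal.ofReal (cF j) * (psi Q s q' : ℝ≥0∞)
              + orF ρ Q cF cP j L' (psi Q s q' * Q + q' - s)
            ≤ ENNReal.ofReal (cF j) * (psi Q s q' : ℝ≥0∞)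
              + (ENNReal.ofReal (cF j)
                + orF ρ Q cF cP j L' (psi Q s q * Q + q - s)) :=
            add_le_add_right (IHbd j hr'r hrQ) _
          _ = ENNReal.ofReal (cF j) * (psi Q s q : ℝ≥0∞)
              + orF ρ Q cF cP j L' (psi Q s q * Q + q - s) := by
            rw [he]
            push_cast
            ring
    refine ⟨?_, ?_, ?_⟩
    · intro j0 L0 h
      injection h with h1 h2
      subst h1; subst h2
      exact hH
    · intro i q q' hqq hq'
      rw [orF_cons, orF_cons]
      exact min_le_min (hH hqq hq') le_rfl
    · intro i q q' hqq hq'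
      rw [orF_cons, orF_cons]
      refine le_trans (min_le_right _ _) ?_
      rcases le_total (orH ρ Q cF cP j L' q')
          (ENNReal.ofReal (cP i j) + orH ρ Q cF cP j L' Q) with h | h
      · rw [min_eq_left h]
        exact add_le_add (ENNReal.ofReal_le_ofReal (hcPF i j)) (hH hq' le_rfl)
      · rw [min_eq_right h]
        exact le_add_self

lemma or_key (hQ : 1 ≤ Q) (hcPF : ∀ a b, cP a b ≤ cF a) (L2 : List N) (L1 : List N) :
    ∀ (i : N) ⦃q : ℕ⦄, q ≤ Q →
      orF ρ Q cF cP i L1 q + QbarOR ρ Q cF cP L2 ≤ orF ρ Q cF cP i (L1 ++ L2) q := by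
  induction L1 with
  | nil =>
    intro i q hq
    rw [orF_nil, zero_add, List.nil_append]
    cases L2 with
    | nil => rw [orF_nil]; exact le_rfl
    | cons j L' =>
      rw [orF_cons]
      refine le_min ?_ le_add_self
      exact (mono_bd ρ Q cF cP hQ hcPF (j :: L')).1 j L' rfl hq le_rfl
  | cons j L1' IH =>
    intro i q hq
    have hstep : ∀ ⦃r : ℕ⦄, r ≤ Q →
        orH ρ Q cF cP j L1' r + QbarOR ρ Q cF cP L2
          ≤ orH ρ Q cF cP j (L1' ++ L2) r := by
      intro r hr
      unfold orH
      calc (∑' s : ℕ, (ENNReal.ofReal (cF j) * (psi Q s r : ℝ≥0∞)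
              + orF ρ Q cF cP j L1' (psi Q s r * Q + r - s)) * ρ j s)
            + QbarOR ρ Q cF cP L2
          = (∑' s : ℕ, (ENNReal.ofReal (cF j) * (psi Q s r : ℝ≥0∞)
              + orF ρ Q cF cP j L1' (psi Q s r * Q + r - s)) * ρ j s)
            + ∑' s : ℕ, QbarOR ρ Q cF cP L2 * ρ j s := by
            rw [ENNReal.tsum_mul_left, (ρ j).tsum_coe, mul_one]
        _ = ∑' s : ℕ, ((ENNReal.ofReal (cF j) * (psi Q s r : ℝ≥0∞)
              + orF ρ Q cF cP j L1' (psi Q s r * Q + r - s))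
              + QbarOR ρ Q cF cP L2) * ρ j s := by
            rw [← ENNReal.tsum_add]
            congr 1
            funext s
            ring
        _ ≤ ∑' s : ℕ, (ENNReal.ofReal (cF j) * (psi Q s r : ℝ≥0∞)
              + orF ρ Q cF cP j (L1' ++ L2) (psi Q s r * Q + r - s)) * ρ j s := by
            apply ENNReal.tsum_le_tsum
            intro s
            apply mul_le_mul_left
            rw [add_assoc]
            exact add_le_add_right (IH j (rem_le Q hQ hr s)) _
    rw [List.cons_append, orF_cons, orF_cons]
    refine le_min ?_ ?_
    · calc _ ≤ orH ρ Q cF cP j L1' q + QbarOR ρ Q cF cP L2 :=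
          add_le_add_left (min_le_left _ _) _
        _ ≤ _ := hstep hq
    · calc _ ≤ (ENNReal.ofReal (cP i j) + orH ρ Q cF cP j L1' Q)
            + QbarOR ρ Q cF cP L2 := add_le_add_left (min_le_right _ _) _
        _ = ENNReal.ofReal (cP i j)
            + (orH ρ Q cF cP j L1' Q + QbarOR ρ Q cF cP L2) := by ring
        _ ≤ _ := add_le_add_right (hstep le_rfl) _

end AuxOR

/-- under the OR policy, the cost-to-go of a concatenated list of remaining
customers dominates the sum of the prefix cost-to-go and the full-capacity recourse of the
suffix: `F(i, L1 ++ L2, q) ≥ F(i, L1, q) + Q̄ᴼᴿ_{L2}`; in particular (taking `L1 = ()`),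
`F(i, L2, q) ≥ Q̄ᴼᴿ_{L2}` for every residual capacity `q ∈ {0, …, Q}`. -/
theorem or_cost_to_go_suffix_bound
    {N : Type*} (ρ : N → PMF ℕ) (Q : ℕ) (hQ : 1 ≤ Q)
    (hmean : ∀ i, ∑' s : ℕ, (s : ℝ≥0∞) * ρ i s ≠ ⊤)
    (bP bF : ℝ) (hbP : 0 ≤ bP) (hbPF : bP ≤ bF)
    (c0 : N → ℝ) (c : N → N → ℝ)
    (hc0 : ∀ i, 0 ≤ c0 i) (hc : ∀ i j, 0 ≤ c i j) (hsymm : ∀ i j, c i j = c j i)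
    (htri1 : ∀ i j, c0 j ≤ c0 i + c i j)
    (htri2 : ∀ i j, c i j ≤ c0 i + c0 j)
    (htri3 : ∀ i j k, c i k ≤ c i j + c j k)
    (i : N) (L1 L2 : List N) (hL2 : L2 ≠ [])
    (hnodup : (L1 ++ L2).Nodup)
    (q : ℕ) (hq : q ≤ Q) :
    orF ρ Q (fun a => bF + 2 * c0 a) (fun a b => bP + c0 a + c0 b - c a b) i L1 q
        + QbarOR ρ Q (fun a => bF + 2 * c0 a) (fun a b => bP + c0 a + c0 b - c a b) L2
      ≤ orF ρ Q (fun a => bF + 2 * c0 a) (fun a b => bP + c0 a + c0 b - c a b) i (L1 ++ L2) q ∧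
    QbarOR ρ Q (fun a => bF + 2 * c0 a) (fun a b => bP + c0 a + c0 b - c a b) L2
      ≤ orF ρ Q (fun a => bF + 2 * c0 a) (fun a b => bP + c0 a + c0 b - c a b) i L2 q := by
  have hcPF : ∀ a b : N, (fun a b => bP + c0 a + c0 b - c a b) a b
      ≤ (fun a => bF + 2 * c0 a) a := by
    intro a b
    have h1 := htri1 a b
    simp only
    linarith
  constructor
  · exact or_key ρ Q _ _ hQ hcPF L2 L1 i hq
  · have h := or_key ρ Q (fun a => bF + 2 * c0 a)
      (fun a b => bP + c0 a + c0 b - c a b) hQ hcPF L2 [] i hq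
    rwa [orF_nil, zero_add, List.nil_append] at h
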